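/- Suppose Assumptions TI, CONT, M0 and M1 hold, and P(G=1, R=0) > 0. Then the distribution of the treated potential outcome for treatment attritors is identified: for every y in the range of μ₁₁, F_{Y₁(1)|G=1,R=0}(y) = F_{Y₀|G=1,R=0}(F_{Y₀|G=1,R=1}^{-1}(F_{Y₁|G=1,R=1}(y))). (Distributional identification step in the proof of Proposition 2.) -/
import Mathlib


open MeasureTheory ProbabilityTheory

/-- Conditional CDF of `X` given the event `A`: `F_{X|A}(y) = P(X ≤ y | A)`. -/
noncomputable def cCDF {Ω : Type*} [MeasurableSpace Ω] (P : Measure Ω) (A : Set Ω)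
    (X : Ω → ℝ) (y : ℝ) : ℝ :=
  ((P[|A]) {ω | X ω ≤ y}).toReal

/-- Generalized inverse `F⁻¹(q) = inf {y ∈ ℝ : F(y) ≥ q}`. -/
noncomputable def ginv (F : ℝ → ℝ) (q : ℝ) : ℝ :=
  sInf {y : ℝ | q ≤ F y}

/-- Conditional expectation of `X` given the event `A`: `E[X·1_A]/P(A)`. -/
noncomputable def cExp {Ω : Type*} [MeasurableSpace Ω] (P : Measure Ω) (A : Set Ω)
    (X : Ω → ℝ) : ℝ :=
  (∫ ω in A, X ω ∂P) / (P A).toReal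

/-- Conditional probability of `B` given `A`: `P(B|A) = P(B ∩ A)/P(A)`. -/
noncomputable def condProb {Ω : Type*} [MeasurableSpace Ω] (P : Measure Ω)
    (A B : Set Ω) : ℝ :=
  (P (B ∩ A)).toReal / (P A).toReal


section Helpers
variable {Ω : Type*} [MeasurableSpace Ω]

lemma cond_congr (P : Measure Ω) {A S T : Set Ω}
    (hA : MeasurableSet A) (h : S ∩ A = T ∩ A) : (P[|A]) S = (P[|A]) T := by
  rw [ProbabilityTheory.cond_apply hA, ProbabilityTheory.cond_apply hA,
    Set.inter_comm A S, Set.inter_comm A T, h]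

lemma cCDF_congr (P : Measure Ω) {A : Set Ω}
    (hA : MeasurableSet A) {X X' : Ω → ℝ} {y y' : ℝ}
    (h : {ω | X ω ≤ y} ∩ A = {ω | X' ω ≤ y'} ∩ A) :
    cCDF P A X y = cCDF P A X' y' := by
  unfold cCDF; rw [cond_congr P hA h]

lemma cond_ne_top (P : Measure Ω) [IsFiniteMeasure P]
    {A : Set Ω} (hA : MeasurableSet A) (hpos : 0 < P A) (S : Set Ω) :
    (P[|A]) S ≠ ⊤ := by
  rw [ProbabilityTheory.cond_apply hA]
  exact ENNReal.mul_ne_top (ENNReal.inv_ne_top.mpr hpos.ne') (measure_ne_top P _)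

lemma cCDF_mono (P : Measure Ω) [IsFiniteMeasure P]
    {A : Set Ω} (hA : MeasurableSet A) (hpos : 0 < P A) (X : Ω → ℝ) :
    Monotone (cCDF P A X) := by
  intro a b hab
  exact ENNReal.toReal_mono (cond_ne_top P hA hpos _)
    (measure_mono (fun ω hω => le_trans hω hab))

lemma cCDF_map_eq (P : Measure Ω) {A : Set Ω}
    {X X' : Ω → ℝ} (hX : Measurable X) (hX' : Measurable X')
    (h : (P[|A]).map X = (P[|A]).map X') (t : ℝ) :
    cCDF P A X t = cCDF P A X' t := by
  unfold cCDF
  have h1 : {ω | X ω ≤ t} = X ⁻¹' Set.Iic t := rfl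
  have h2 : {ω | X' ω ≤ t} = X' ⁻¹' Set.Iic t := rfl
  rw [h1, h2, ← Measure.map_apply hX measurableSet_Iic,
    ← Measure.map_apply hX' measurableSet_Iic, h]

end Helpers

/-- **Distributional identification step in Proposition 2 (treatment attritors)**: under
Assumptions TI, CONT, M0 and M1 and `P(G=1, R=0) > 0`, for every `y` in the range of `μ₁₁`,
`F_{Y₁(1)|G=1,R=0}(y) = F_{Y₀|G=1,R=0}(F_{Y₀|G=1,R=1}⁻¹(F_{Y₁|G=1,R=1}(y)))`. -/
theorem cic_prop2_dist_treatment_attritors {Ω : Type*} [MeasurableSpace Ω]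
    (P : Measure Ω) [IsProbabilityMeasure P]
    (U₀ U₁ : Ω → ℝ) (G R : Ω → Bool)
    (hU₀ : Measurable U₀) (hU₁ : Measurable U₁)
    (hG : Measurable G) (hR : Measurable R)
    (μ00 μ10 μ11 : ℝ → ℝ)
    -- observed outcomes
    (Y0 Y1 : Ω → ℝ)
    (hY0 : ∀ ω, Y0 ω = μ00 (U₀ ω))
    (hY1 : ∀ ω, Y1 ω = if G ω = true then μ11 (U₁ ω) else μ10 (U₁ ω))
    -- Assumption TI (time invariance)
    (hTI : ∀ g r : Bool, 0 < P {ω | G ω = g ∧ R ω = r} →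
      (P[|{ω | G ω = g ∧ R ω = r}]).map U₀ = (P[|{ω | G ω = g ∧ R ω = r}]).map U₁)
    -- Assumption CONT
    (hCONT : ∀ g : Bool, 0 < P {ω | G ω = g ∧ R ω = true} ∧
      Continuous (cCDF P {ω | G ω = g ∧ R ω = true} U₁) ∧
      StrictMono (cCDF P {ω | G ω = g ∧ R ω = true} U₁))
    -- Assumption M0
    (hμ00c : Continuous μ00) (hμ00 : StrictMono μ00)
    (hμ10c : Continuous μ10) (hμ10 : StrictMono μ10)
    -- Assumption M1
    (hμ11c : Continuous μ11) (hμ11 : StrictMono μ11)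
    -- positive probability of treatment attritors
    (hpos : 0 < P {ω | G ω = true ∧ R ω = false})
    (y : ℝ) (hy : y ∈ Set.range μ11) :
    cCDF P {ω | G ω = true ∧ R ω = false} (fun ω => μ11 (U₁ ω)) y
      = cCDF P {ω | G ω = true ∧ R ω = false} Y0
          (ginv (cCDF P {ω | G ω = true ∧ R ω = true} Y0)
            (cCDF P {ω | G ω = true ∧ R ω = true} Y1 y)) := by
  
  obtain ⟨u, rfl⟩ := hy
  set A₀ : Set Ω := {ω | G ω = true ∧ R ω = false} with hA₀def
  set A₁ : Set Ω := {ω | G ω = true ∧ R ω = true} with hA₁def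
  have hA₀ : MeasurableSet A₀ := by
    have : A₀ = G ⁻¹' {true} ∩ R ⁻¹' {false} := by ext ω; simp [hA₀def]
    rw [this]
    exact (hG (measurableSet_singleton _)).inter (hR (measurableSet_singleton _))
  have hA₁ : MeasurableSet A₁ := by
    have : A₁ = G ⁻¹' {true} ∩ R ⁻¹' {true} := by ext ω; simp [hA₁def]
    rw [this]
    exact (hG (measurableSet_singleton _)).inter (hR (measurableSet_singleton _))
  have hA₁pos : 0 < P A₁ := (hCONT true).1
  have hTI₀ := hTI true false hpos
  have hTI₁ := hTI true true hA₁pos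
  set C : ℝ → ℝ := cCDF P A₁ U₁ with hCdef
  have hCmono : StrictMono C := (hCONT true).2.2
  -- the CDF of Y0 given A₁ evaluated at points μ00 t equals C t
  have hFY0 : ∀ t : ℝ, cCDF P A₁ Y0 (μ00 t) = C t := by
    intro t
    have h1 : cCDF P A₁ Y0 (μ00 t) = cCDF P A₁ U₀ t := by
      apply cCDF_congr P hA₁
      congr 1
      ext ω
      simp [hY0, hμ00.le_iff_le]
    rw [h1, hCdef]
    exact cCDF_map_eq P hU₀ hU₁ hTI₁ t
  -- q = C u
  have hq : cCDF P A₁ Y1 (μ11 u) = C u := by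
    apply cCDF_congr P hA₁
    ext ω
    simp only [Set.mem_inter_iff, Set.mem_setOf_eq, hA₁def]
    constructor
    · rintro ⟨h1, hg, hr⟩
      refine ⟨?_, hg, hr⟩
      rw [hY1 ω, if_pos hg] at h1
      exact (hμ11.le_iff_le).mp h1
    · rintro ⟨h1, hg, hr⟩
      refine ⟨?_, hg, hr⟩
      rw [hY1 ω, if_pos hg]
      exact hμ11.monotone h1
  -- the generalized inverse evaluates to μ00 u
  have hginv : ginv (cCDF P A₁ Y0) (cCDF P A₁ Y1 (μ11 u)) = μ00 u := by
    rw [hq]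
    have hmem : C u ≤ cCDF P A₁ Y0 (μ00 u) := by rw [hFY0 u]
    have hlb : ∀ x ∈ {x : ℝ | C u ≤ cCDF P A₁ Y0 x}, μ00 u ≤ x := by
      intro x hx
      by_contra hlt
      push_neg at hlt
      -- find t < u with x < μ00 t
      have hev : ∀ᶠ t in nhds u, x < μ00 t :=
        (hμ00c.tendsto u).eventually (eventually_gt_nhds hlt)
      have hev' : ∀ᶠ t in nhdsWithin u (Set.Iio u), x < μ00 t ∧ t < u :=
        (hev.filter_mono nhdsWithin_le_nhds).and self_mem_nhdsWithin
      obtain ⟨t, hxt, htu⟩ := hev'.exists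
      have h1 : cCDF P A₁ Y0 x ≤ cCDF P A₁ Y0 (μ00 t) :=
        cCDF_mono P hA₁ hA₁pos Y0 hxt.le
      rw [hFY0 t] at h1
      have h2 : C u ≤ C t := le_trans hx h1
      exact absurd (hCmono htu) (not_lt.mpr h2)
    unfold ginv
    exact le_antisymm (csInf_le ⟨μ00 u, hlb⟩ hmem) (le_csInf ⟨μ00 u, hmem⟩ hlb)
  rw [hginv]
  -- both sides equal cCDF P A₀ U₀ u
  have hL : cCDF P A₀ (fun ω => μ11 (U₁ ω)) (μ11 u) = cCDF P A₀ U₁ u := by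
    apply cCDF_congr P hA₀
    congr 1
    ext ω
    simp [hμ11.le_iff_le]
  have hR' : cCDF P A₀ Y0 (μ00 u) = cCDF P A₀ U₀ u := by
    apply cCDF_congr P hA₀
    congr 1
    ext ω
    simp [hY0, hμ00.le_iff_le]
  rw [hL, hR', ← cCDF_map_eq P hU₀ hU₁ hTI₀ u]
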